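/- Let 0 ≤ α < n, δ > 0, 0 < ε < 1 and let s be a nonnegative integer. Let J ⊆ I ⊆ A be cubes in ℝⁿ with ℓ(J) = 2^{−s} ℓ(I) and dist(c_J, ℝⁿ∖I) ≥ (1/2) ℓ(I)^{1−ε} ℓ(J)^ε. Then for every positive locally finite Borel measure σ on ℝⁿ: P^α_{1+δ}(J, 1_{A∖I} σ) ≤ C · 2^{−sδ(1−ε)} · P^α(J, 1_{A∖I} σ), with C depending only on n, α and δ. -/

import Mathlib

open MeasureTheory
open scoped ENNReal NNReal

noncomputable section

/-- An axis-parallel half-open cube in `ℝⁿ`, given by its corner `a` and side length `l`. -/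
structure QCube (n : ℕ) where
  a : Fin n → ℝ
  l : ℝ

/-- The half-open cube as a subset of `ℝⁿ`. -/
def QCube.pts {n : ℕ} (Q : QCube n) : Set (EuclideanSpace ℝ (Fin n)) :=
  {x | ∀ i, Q.a i ≤ x i ∧ x i < Q.a i + Q.l}

/-- The center of a cube. -/
def QCube.center {n : ℕ} (Q : QCube n) : EuclideanSpace ℝ (Fin n) :=
  (EuclideanSpace.equiv (Fin n) ℝ).symm fun i => Q.a i + Q.l / 2

/-- The concentric dilate `γQ` of a cube `Q`. -/
def QCube.dilate {n : ℕ} (Q : QCube n) (γ : ℝ) : QCube n :=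
  ⟨fun i => Q.a i + Q.l / 2 - γ * Q.l / 2, γ * Q.l⟩

/-- The `m`-weighted `α`-fractional Poisson integral
`P^α_m(Q,μ) = ∫ ℓ(Q)^m / (ℓ(Q)+|y−c_Q|)^{n+m−α} dμ(y)`; `P^α = P^α_1`. -/
def poissonM {n : ℕ} (α m : ℝ) (Q : QCube n)
    (μ : Measure (EuclideanSpace ℝ (Fin n))) : ℝ≥0∞ :=
  ∫⁻ y, ENNReal.ofReal (Q.l ^ m / (Q.l + dist y Q.center) ^ ((n : ℝ) + m - α)) ∂μ

/-!
Raising the weight of the Poisson kernel from `m` to `m + δ` multiplies it pointwise by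
`(ℓ(J) / (ℓ(J) + |y - c_J|))^δ`. Off `I` the goodness condition gives
`|y - c_J| ≥ ½ ℓ(I)^{1-ε} ℓ(J)^ε = ½ 2^{s(1-ε)} ℓ(J)`, so this factor is at most
`(2 · 2^{-s(1-ε)})^δ`, and integrating over `A ∖ I` gives the claim with `C = 2^δ`.
-/

lemma QCube.measurableSet_pts {n : ℕ} (Q : QCube n) : MeasurableSet Q.pts := by
  have hcoord : ∀ i, Measurable fun x : EuclideanSpace ℝ (Fin n) => x i := fun i =>
    (measurable_pi_apply i).comp (PiLp.continuous_ofLp 2 _).measurable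
  have hpts : Q.pts = ⋂ i, ({x | Q.a i ≤ x i} ∩ {x | x i < Q.a i + Q.l}) := by
    ext x; simp [QCube.pts, Set.mem_iInter, forall_and]
  rw [hpts]
  exact MeasurableSet.iInter fun i =>
    (measurableSet_le measurable_const (hcoord i)).inter
      (measurableSet_lt (hcoord i) measurable_const)

lemma rpow_add_div_rpow_add {L D : ℝ} (hL : 0 < L) (hD : 0 < D) (m e δ : ℝ) :
    L ^ (m + δ) / D ^ (e + δ) = (L / D) ^ δ * (L ^ m / D ^ e) := by
  rw [Real.rpow_add hL, Real.rpow_add hD, Real.div_rpow hL.le hD.le]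
  ring

lemma poissonM_add_le {n : ℕ} (α m : ℝ) {δ r : ℝ} (hδ : 0 ≤ δ) (Q : QCube n)
    (hQ : 0 < Q.l)
    (μ : Measure (EuclideanSpace ℝ (Fin n))) {S : Set (EuclideanSpace ℝ (Fin n))}
    (hS : MeasurableSet S) (hr : ∀ y ∈ S, Q.l / (Q.l + dist y Q.center) ≤ r) :
    poissonM α (m + δ) Q (μ.restrict S)
      ≤ ENNReal.ofReal (r ^ δ) * poissonM α m Q (μ.restrict S) := by
  rw [poissonM, poissonM, ← lintegral_const_mul' _ _ ENNReal.ofReal_ne_top]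
  refine lintegral_mono_ae <|
    (ae_restrict_iff' hS).2 (Filter.Eventually.of_forall fun y hy => ?_)
  have hD : 0 < Q.l + dist y Q.center := by positivity
  have hkernel : (n : ℝ) + (m + δ) - α = ((n : ℝ) + m - α) + δ := by ring
  rw [← ENNReal.ofReal_mul' (by positivity), hkernel, rpow_add_div_rpow_add hQ hD]
  gcongr
  exact hr y hy

lemma div_add_le_of_half_mul_le {L K d : ℝ} (hL : 0 < L) (hK : 0 < K)
    (hd : 1 / 2 * (K * L) ≤ d) :
    L / (L + d) ≤ 2 / K := by
  rw [div_le_div_iff₀ (by nlinarith [mul_pos hK hL]) hK]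
  nlinarith

lemma rpow_one_sub_mul_rpow_of_eq_two_rpow_neg_mul {L M : ℝ} (hL : 0 < L) (s ε : ℝ)
    (h : L = 2 ^ (-s) * M) : M ^ (1 - ε) * L ^ ε = 2 ^ (s * (1 - ε)) * L := by
  have hM : M = 2 ^ s * L := by
    rw [h, ← mul_assoc, ← Real.rpow_add two_pos, add_neg_cancel, Real.rpow_zero, one_mul]
  rw [hM, Real.mul_rpow (by positivity) hL.le, ← Real.rpow_mul zero_le_two, mul_assoc,
    ← Real.rpow_add hL, sub_add_cancel, Real.rpow_one]

theorem statement11_general (n : ℕ) (α δ : ℝ)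
    (hδ0 : 0 < δ) :
    ∃ C : ℝ, 0 < C ∧
      ∀ ε : ℝ, 0 < ε → ε < 1 →
      ∀ (s : ℕ) (J I A : QCube n), 0 < J.l → 0 < I.l → 0 < A.l →
        J.pts ⊆ I.pts → I.pts ⊆ A.pts → J.l = 2 ^ (-(s : ℝ)) * I.l →
        (∀ y ∉ I.pts, 1 / 2 * I.l ^ (1 - ε) * J.l ^ ε ≤ dist J.center y) →
        ∀ σ : Measure (EuclideanSpace ℝ (Fin n)), IsLocallyFiniteMeasure σ →
          poissonM α (1 + δ) J (σ.restrict (A.pts \ I.pts))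
            ≤ ENNReal.ofReal (C * 2 ^ (-(s : ℝ) * δ * (1 - ε)))
              * poissonM α 1 J (σ.restrict (A.pts \ I.pts)) := by
  refine ⟨2 ^ δ, by positivity, fun ε _ _ s J I A hJ _ _ _ _ hlen hgood σ _ => ?_⟩
  have hscale := rpow_one_sub_mul_rpow_of_eq_two_rpow_neg_mul hJ s ε hlen
  have hratio : ∀ y ∈ A.pts \ I.pts,
      J.l / (J.l + dist y J.center) ≤ 2 / 2 ^ ((s : ℝ) * (1 - ε)) := fun y hy => by
    refine div_add_le_of_half_mul_le hJ (by positivity) ?_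
    rw [← hscale, dist_comm, ← mul_assoc]
    exact hgood y hy.2
  have hconst : ((2 : ℝ) / 2 ^ ((s : ℝ) * (1 - ε))) ^ δ
      = 2 ^ δ * 2 ^ (-(s : ℝ) * δ * (1 - ε)) := by
    rw [Real.div_rpow zero_le_two (by positivity), ← Real.rpow_mul zero_le_two, div_eq_mul_inv,
      ← Real.rpow_neg zero_le_two]
    ring_nf
  rw [← hconst]
  exact poissonM_add_le α 1 hδ0.le J hJ σ
    (A.measurableSet_pts.diff I.measurableSet_pts) hratio

/-- Decay of the `(1+δ)`-weighted Poisson integral under goodness: if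
`0 < ε < 1`, `s ≥ 0`, and `J ⊆ I ⊆ A` are cubes with `ℓ(J) = 2^{−s} ℓ(I)` and
`dist(c_J, ℝⁿ∖I) ≥ ½ ℓ(I)^{1−ε} ℓ(J)^ε`, then
`P^α_{1+δ}(J, 1_{A∖I}σ) ≤ C 2^{−sδ(1−ε)} P^α(J, 1_{A∖I}σ)` with `C` depending only on
`n`, `α` and `δ`. -/
theorem statement11 (n : ℕ) (α δ : ℝ) (hn : 1 ≤ n) (hα0 : 0 ≤ α) (hαn : α < n)
    (hδ0 : 0 < δ) :
    ∃ C : ℝ, 0 < C ∧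
      ∀ ε : ℝ, 0 < ε → ε < 1 →
      ∀ (s : ℕ) (J I A : QCube n), 0 < J.l → 0 < I.l → 0 < A.l →
        J.pts ⊆ I.pts → I.pts ⊆ A.pts → J.l = 2 ^ (-(s : ℝ)) * I.l →
        (∀ y ∉ I.pts, 1 / 2 * I.l ^ (1 - ε) * J.l ^ ε ≤ dist J.center y) →
        ∀ σ : Measure (EuclideanSpace ℝ (Fin n)), IsLocallyFiniteMeasure σ →
          poissonM α (1 + δ) J (σ.restrict (A.pts \ I.pts))
            ≤ ENNReal.ofReal (C * 2 ^ (-(s : ℝ) * δ * (1 - ε)))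
              * poissonM α 1 J (σ.restrict (A.pts \ I.pts)) :=
  statement11_general n α δ hδ0
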